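/- arXiv:math/0608736 — 2 statements merged into one kernel-verified Lean document; each statement's English description precedes it below -/
import Mathlib

section
/- Let S be a control semigroup, X a metric space, and n ∈ ℕ. Then asdim_S X ≤ n if and only if there exists f ∈ S such that for all sufficiently large s > 0 there is a cover U of X with s-multiplicity s-m(U) ≤ n+1 that is f(s)-bounded. -/
open Filter Set Metric Topology
open scoped NNReal ENNReal

/-- A large-scale (asymptotic) dim-control function: continuous, increasing,
eventually at least the identity, tending to infinity. -/
def IsLSControl (f : ℝ≥0 → ℝ≥0) : Prop :=
  Continuous f ∧ Monotone f ∧ (∀ᶠ x in atTop, x ≤ f x) ∧ Tendsto f atTop atTop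

/-- Asymptotically linear: coincides with a linear function on a neighborhood of infinity. -/
def IsAsympLinear (f : ℝ≥0 → ℝ≥0) : Prop :=
  ∃ a b : ℝ≥0, ∀ᶠ x in atTop, f x = a * x + b

/-- A (large-scale) control semigroup. -/
def IsControlSemigroup (S : Set (ℝ≥0 → ℝ≥0)) : Prop :=
  (∀ f ∈ S, IsLSControl f) ∧
  (∀ f, IsLSControl f → IsAsympLinear f → f ∈ S) ∧
  (∀ f ∈ S, ∀ g ∈ S, f ∘ g ∈ S)

/-- A family of subsets is `s`-disjoint if distinct members are at distance `> s`. -/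
def SDisjoint {X : Type*} [MetricSpace X] (s : ℝ≥0) (𝒰 : Set (Set X)) : Prop :=
  ∀ U ∈ 𝒰, ∀ V ∈ 𝒰, U ≠ V → ∀ x ∈ U, ∀ y ∈ V, (s : ℝ) < dist x y

/-- A family of subsets is `D`-bounded if each member has diameter at most `D`. -/
def BoundedBy {X : Type*} [MetricSpace X] (D : ℝ≥0) (𝒰 : Set (Set X)) : Prop :=
  ∀ U ∈ 𝒰, EMetric.diam U ≤ (D : ℝ≥0∞)

/-- `asdim_S X ≤ n`. -/
def ASDimLE (S : Set (ℝ≥0 → ℝ≥0)) (X : Type*) [MetricSpace X] (n : ℕ) : Prop :=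
  ∃ f ∈ S, ∃ s₀ : ℝ≥0, ∀ s : ℝ≥0, s₀ ≤ s →
    ∃ 𝒰 : Fin (n + 1) → Set (Set X),
      (⋃ i, ⋃₀ 𝒰 i) = univ ∧ ∀ i, SDisjoint s (𝒰 i) ∧ BoundedBy (f s) (𝒰 i)

/-- The `S`-controlled asymptotic dimension, as an element of `ℕ∞`. -/
noncomputable def ASDim (S : Set (ℝ≥0 → ℝ≥0)) (X : Type*) [MetricSpace X] : ℕ∞ :=
  sInf {k : ℕ∞ | ∃ n : ℕ, k = n ∧ ASDimLE S X n}

/-- `S₁ ⪯ S₂` : `S₂` is finer than `S₁`. -/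
def Preceq (S₁ S₂ : Set (ℝ≥0 → ℝ≥0)) : Prop :=
  ∀ f ∈ S₂, ∃ g ∈ S₁, ∀ᶠ x in atTop, f x ≤ g x

/-!
Forward direction: a `2s`-disjoint family meets every ball of radius `s` in at most one member,
so the union of `n + 1` such families has `s`-multiplicity at most `n + 1`.

Backward direction: take a cover `𝒰` of `t`-multiplicity at most `n + 1` with `t = (n + 2) s`,
and let `φ_U x` be the distance from `x` to the complement of the `t`-thickening of `U`. These
functions are `1`-Lipschitz, at most `n + 1` of them are positive at a given point, and at least
one is `≥ t > (n + 1) s`. By pigeonhole some window `(j s, (j + 1) s]` with `j ≤ n` contains none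
of the values `φ_U x`, so `x` lies in the level-`j` layer cut out by `σ = {U | φ_U x > j s}`.
Two different layers of the same level are `s`-apart by the Lipschitz bound, and each layer lies
in the `t`-thickening of a member of `𝒰`.
-/

open Function

namespace IsControlSemigroup

variable {S : Set (ℝ≥0 → ℝ≥0)}

lemma const_mul_mem (hS : IsControlSemigroup S) {a : ℝ≥0} (ha : 1 ≤ a) : (a * ·) ∈ S :=
  hS.2.1 _ ⟨continuous_const.mul continuous_id, fun _ _ h => mul_le_mul_right h a,
    .of_forall fun _ => le_mul_of_one_le_left zero_le ha,
    tendsto_atTop_mono (fun _ => le_mul_of_one_le_left zero_le ha) tendsto_id⟩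
    ⟨a, 0, .of_forall fun _ => (add_zero _).symm⟩

end IsControlSemigroup

section Families

variable {X : Type*} [MetricSpace X]

lemma BoundedBy.mono {D D' : ℝ≥0} {𝒰 : Set (Set X)} (h : BoundedBy D 𝒰) (hD : D ≤ D') :
    BoundedBy D' 𝒰 :=
  fun U hU => (h U hU).trans (by exact_mod_cast hD)

lemma SDisjoint.subsingleton_meeting_ball {s : ℝ≥0} {𝒰 : Set (Set X)} (h : SDisjoint (2 * s) 𝒰)
    (x : X) : {U | U ∈ 𝒰 ∧ (U ∩ ball x s).Nonempty}.Subsingleton := by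
  rintro U ⟨hU, u, huU, hux⟩ V ⟨hV, v, hvV, hvx⟩
  by_contra hne
  have hfar := h U hU V hV hne u huU v hvV
  have hnear : dist u v < s + s :=
    (dist_triangle_right u v x).trans_lt (add_lt_add (mem_ball.1 hux) (mem_ball.1 hvx))
  push_cast at hfar
  linarith

lemma encard_meeting_ball_iUnion_le {n : ℕ} {s : ℝ≥0} {𝒰 : Fin (n + 1) → Set (Set X)}
    (h : ∀ i, SDisjoint (2 * s) (𝒰 i)) (x : X) :
    {U | U ∈ ⋃ i, 𝒰 i ∧ (U ∩ ball x s).Nonempty}.encard ≤ n + 1 := by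
  have hunion : {U | U ∈ ⋃ i, 𝒰 i ∧ (U ∩ ball x s).Nonempty} =
      ⋃ i, {U | U ∈ 𝒰 i ∧ (U ∩ ball x s).Nonempty} := by
    ext U
    simp only [mem_iUnion, mem_ofPred_eq, exists_and_right]
  calc _ ≤ ∑ i, {U | U ∈ 𝒰 i ∧ (U ∩ ball x s).Nonempty}.encard :=
        hunion ▸ encard_iUnion_le_of_fintype _
    _ ≤ ∑ _i : Fin (n + 1), 1 :=
        Finset.sum_le_sum fun i _ => encard_le_one_iff_subsingleton.2
          ((h i).subsingleton_meeting_ball x)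
    _ = n + 1 := by simp

end Families

lemma Set.exists_disjoint_of_encard_lt_card {ι α : Type*} {I : ι → Set α} {B : Set α}
    (hI : Pairwise (Disjoint on I)) (hB : B.encard < ENat.card ι) : ∃ i, Disjoint (I i) B := by
  by_contra! h
  choose g hgI hgB using fun i => not_disjoint_iff.1 (h i)
  have hg : InjOn g univ := fun i _ j _ hij =>
    hI.eq (not_disjoint_iff.2 ⟨g i, hgI i, hij ▸ hgI j⟩)
  exact hB.not_ge (encard_univ ι ▸ encard_le_encard_of_injOn (fun i _ => hgB i) hg)

section Layers

variable {ι X : Type*} (𝒰 : Set ι) (φ : ι → X → ℝ≥0∞)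

def layer (lo hi : ℝ≥0∞) (σ : Set ι) : Set X :=
  {x | (∀ i ∈ σ, hi < φ i x) ∧ ∀ i ∈ 𝒰 \ σ, φ i x ≤ lo}

def layers (lo hi : ℝ≥0∞) : Set (Set X) :=
  layer 𝒰 φ lo hi '' {σ | σ ⊆ 𝒰 ∧ σ.Nonempty}

variable {𝒰 φ}

lemma lt_dist_of_mem_layer [MetricSpace X] (hφ : ∀ i x y, φ i x ≤ φ i y + edist x y) {s : ℝ≥0}
    {lo hi : ℝ≥0∞} (hlo : lo ≠ ⊤) (hs : lo + s ≤ hi) {σ τ : Set ι} {i : ι} (hiσ : i ∈ σ)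
    (hiτ : i ∈ 𝒰 \ τ) {x y : X} (hx : x ∈ layer 𝒰 φ lo hi σ) (hy : y ∈ layer 𝒰 φ lo hi τ) :
    (s : ℝ) < dist x y := by
  have : lo + s < lo + edist x y :=
    calc lo + s ≤ hi := hs
      _ < φ i x := hx.1 i hiσ
      _ ≤ φ i y + edist x y := hφ i x y
      _ ≤ lo + edist x y := by gcongr; exact hy.2 i hiτ
  rw [ENNReal.add_lt_add_iff_left hlo, edist_nndist, ENNReal.coe_lt_coe] at this
  exact_mod_cast this

lemma sDisjoint_layers [MetricSpace X] (hφ : ∀ i x y, φ i x ≤ φ i y + edist x y) {s : ℝ≥0}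
    {lo hi : ℝ≥0∞} (hlo : lo ≠ ⊤) (hs : lo + s ≤ hi) : SDisjoint s (layers 𝒰 φ lo hi) := by
  rintro _ ⟨σ, ⟨hσ, -⟩, rfl⟩ _ ⟨τ, ⟨hτ, -⟩, rfl⟩ hne x hx y hy
  by_cases hστ : σ ⊆ τ
  · obtain ⟨i, hiτ, hiσ⟩ := not_subset.1 fun hτσ => hne (by rw [hστ.antisymm hτσ])
    rw [dist_comm]
    exact lt_dist_of_mem_layer hφ hlo hs hiτ ⟨hτ hiτ, hiσ⟩ hy hx
  · obtain ⟨i, hiσ, hiτ⟩ := not_subset.1 hστ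
    exact lt_dist_of_mem_layer hφ hlo hs hiσ ⟨hσ hiσ, hiτ⟩ hx hy

lemma layer_subset_pos {lo hi : ℝ≥0∞} {σ : Set ι} {i : ι} (hiσ : i ∈ σ) :
    layer 𝒰 φ lo hi σ ⊆ {x | 0 < φ i x} :=
  fun _ hx => zero_le.trans_lt (hx.1 i hiσ)

lemma exists_mem_sUnion_layers {n : ℕ} {s : ℝ≥0} {x : X}
    (hx : {i | i ∈ 𝒰 ∧ 0 < φ i x}.encard ≤ n + 1) (hbig : ∃ i ∈ 𝒰, (n + 1) * (s : ℝ≥0∞) < φ i x) :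
    ∃ j : Fin (n + 1), x ∈ ⋃₀ layers 𝒰 φ ((j : ℕ) * s) (((j : ℕ) + 1) * s) := by
  obtain ⟨i₀, hi₀, hbig⟩ := hbig
  set B := {i | i ∈ 𝒰 ∧ 0 < φ i x} \ {i₀}
  have hB : B.encard < ENat.card (Fin (n + 1)) := by
    have := encard_sdiff_singleton_add_one (show i₀ ∈ {i | i ∈ 𝒰 ∧ 0 < φ i x} from
      ⟨hi₀, zero_le.trans_lt hbig⟩)
    simp only [ENat.card_eq_coe_fintype_card, Fintype.card_fin, Nat.cast_add, Nat.cast_one]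
    rwa [ENat.lt_add_one_iff (ENat.natCast_ne_top n), ← ENat.add_le_add_iff_right ENat.one_ne_top,
      this]
  have hmono : Monotone fun m : ℕ => (m : ℝ≥0∞) * s := fun _ _ h =>
    mul_le_mul_left (Nat.cast_le.2 h) _
  have hI : Pairwise (Disjoint on fun j : Fin (n + 1) =>
      (φ · x) ⁻¹' Ioc ((j : ℕ) * (s : ℝ≥0∞)) ((j + 1) * s)) := fun j k hjk => by
    simpa [Nat.cast_add_one] using
      (hmono.pairwise_disjoint_on_Ioc_succ (Fin.val_injective.ne hjk)).preimage (φ · x)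
  obtain ⟨j, hj⟩ := exists_disjoint_of_encard_lt_card hI hB
  have hjn : ((j : ℕ) + 1) * (s : ℝ≥0∞) ≤ (n + 1) * s := by
    gcongr
    exact_mod_cast Nat.le_of_lt_succ j.isLt
  refine ⟨j, _, ⟨{i | i ∈ 𝒰 ∧ (j : ℕ) * (s : ℝ≥0∞) < φ i x}, ⟨fun i hi => hi.1, i₀, hi₀, ?_⟩,
    rfl⟩, fun i hi => ?_, fun i hi => not_lt.1 fun h => hi.2 ⟨hi.1, h⟩⟩
  · calc (j : ℝ≥0∞) * s ≤ (j + 1) * s := by gcongr; exact le_self_add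
      _ ≤ (n + 1) * s := hjn
      _ < φ i₀ x := hbig
  · refine not_le.1 fun hle =>
      hj.ne_of_mem (a := i) ⟨hi.2, hle⟩ ⟨⟨hi.1, zero_le.trans_lt hi.2⟩, ?_⟩ rfl
    rintro rfl
    exact (hle.trans hjn).not_gt hbig

end Layers

section Depth

variable {X : Type*} [MetricSpace X]

noncomputable def depth (t : ℝ≥0) (U : Set X) (x : X) : ℝ≥0∞ :=
  infEDist x (thickening t U)ᶜ

lemma depth_le_depth_add_edist (t : ℝ≥0) (U : Set X) (x y : X) :
    depth t U x ≤ depth t U y + edist x y :=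
  infEDist_le_infEDist_add_edist

variable {t : ℝ≥0} {U : Set X} {x : X}

lemma coe_le_depth (hx : x ∈ U) : (t : ℝ≥0∞) ≤ depth t U x :=
  le_infEDist.2 fun y hy => by
    have hty : (t : ℝ≥0∞) ≤ infEDist y U := by
      simpa [mem_thickening_iff_infEDist_lt] using hy
    exact edist_comm x y ▸ hty.trans (infEDist_le_edist_of_mem hx)

lemma mem_thickening_of_depth_pos (h : 0 < depth t U x) : x ∈ thickening t U := by
  by_contra hx
  exact h.ne' (infEDist_zero_of_mem hx)

theorem exists_sDisjoint_cover_of_multiplicity_le {𝒰 : Set (Set X)} {n : ℕ} {s t D : ℝ≥0}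
    (hst : (n + 1) * s < t) (hcov : ⋃₀ 𝒰 = univ)
    (hmult : ∀ x : X, {U | U ∈ 𝒰 ∧ (U ∩ ball x t).Nonempty}.encard ≤ n + 1)
    (hbdd : BoundedBy D 𝒰) :
    ∃ 𝒱 : Fin (n + 1) → Set (Set X),
      (⋃ j, ⋃₀ 𝒱 j) = univ ∧ ∀ j, SDisjoint s (𝒱 j) ∧ BoundedBy (D + 2 * t) (𝒱 j) := by
  refine ⟨fun j => layers 𝒰 (depth t) ((j : ℕ) * s) (((j : ℕ) + 1) * s),
    eq_univ_of_forall fun x => ?_, fun j => ⟨?_, ?_⟩⟩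
  · obtain ⟨U, hU, hxU⟩ := mem_sUnion.1 (hcov.symm ▸ mem_univ x)
    have hpos : {U | U ∈ 𝒰 ∧ 0 < depth t U x}.encard ≤ n + 1 := by
      refine (encard_le_encard ?_).trans (hmult x)
      rintro V ⟨hV, hpos⟩
      refine ⟨hV, ?_⟩
      obtain ⟨z, hz, hxz⟩ := mem_thickening_iff.1 (mem_thickening_of_depth_pos hpos)
      exact ⟨z, hz, by rwa [mem_ball, dist_comm]⟩
    have hst' : (n + 1) * (s : ℝ≥0∞) < t := by exact_mod_cast hst
    obtain ⟨j, hj⟩ :=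
      exists_mem_sUnion_layers (s := s) hpos ⟨U, hU, hst'.trans_le (coe_le_depth hxU)⟩
    exact mem_iUnion.2 ⟨j, hj⟩
  · have hlo : ((j : ℕ) : ℝ≥0∞) * s ≠ ⊤ := by finiteness
    exact sDisjoint_layers (depth_le_depth_add_edist t) hlo (add_one_mul _ _).ge
  · rintro _ ⟨σ, ⟨hσ, U, hU⟩, rfl⟩
    calc ediam (layer 𝒰 (depth t) _ _ σ) ≤ ediam (thickening t U) :=
          ediam_mono fun x hx => mem_thickening_of_depth_pos (layer_subset_pos hU hx)
      _ ≤ ediam U + 2 * t := ediam_thickening_le t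
      _ ≤ ((D + 2 * t : ℝ≥0) : ℝ≥0∞) := by
          push_cast
          gcongr
          exact hbdd U (hσ hU)

end Depth

def MultiplicityASDimLE (S : Set (ℝ≥0 → ℝ≥0)) (X : Type*) [MetricSpace X] (n : ℕ) : Prop :=
  ∃ f ∈ S, ∃ s₀ : ℝ≥0, ∀ s : ℝ≥0, s₀ ≤ s →
    ∃ 𝒰 : Set (Set X), ⋃₀ 𝒰 = univ ∧
      (∀ x : X, {U | U ∈ 𝒰 ∧ (U ∩ Metric.ball x (s : ℝ)).Nonempty}.encard ≤ (n + 1 : ℕ∞)) ∧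
      BoundedBy (f s) 𝒰

section ASDim

variable {S : Set (ℝ≥0 → ℝ≥0)} {X : Type*} [MetricSpace X]

lemma ASDimLE.mono {m n : ℕ} (hmn : m ≤ n) (hm : ASDimLE S X m) : ASDimLE S X n := by
  classical
  obtain ⟨f, hf, s₀, H⟩ := hm
  refine ⟨f, hf, s₀, fun s hs => ?_⟩
  obtain ⟨𝒰, hcov, h𝒰⟩ := H s hs
  refine ⟨fun i => if h : (i : ℕ) < m + 1 then 𝒰 ⟨i, h⟩ else ∅, eq_univ_of_forall fun x => ?_,
    fun i => ?_⟩
  · obtain ⟨i, hi⟩ := mem_iUnion.1 (hcov.symm ▸ mem_univ x)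
    exact mem_iUnion.2 ⟨Fin.castLE (by omega) i, by simpa [i.isLt] using hi⟩
  · dsimp only
    split_ifs
    · exact h𝒰 _
    · exact ⟨by simp [SDisjoint], by simp [BoundedBy]⟩

lemma asDim_le_iff {n : ℕ} : ASDim S X ≤ n ↔ ASDimLE S X n := by
  refine ⟨fun h => ?_, fun h => sInf_le ⟨n, rfl, h⟩⟩
  have hn : (n : ℕ∞) < n + 1 := (ENat.lt_add_one_iff (ENat.natCast_ne_top n)).2 le_rfl
  obtain ⟨_, ⟨m, rfl, hm⟩, hmn⟩ := sInf_lt_iff.1 (h.trans_lt hn)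
  exact hm.mono (by exact_mod_cast (ENat.lt_add_one_iff (ENat.natCast_ne_top n)).1 hmn)

lemma ASDimLE.multiplicityASDimLE (hS : IsControlSemigroup S) {n : ℕ} (h : ASDimLE S X n) :
    MultiplicityASDimLE S X n := by
  obtain ⟨f, hf, s₀, H⟩ := h
  refine ⟨f ∘ (2 * ·), hS.2.2 f hf _ (hS.const_mul_mem one_le_two), s₀, fun s hs => ?_⟩
  obtain ⟨𝒰, hcov, h𝒰⟩ := H (2 * s) (hs.trans (le_mul_of_one_le_left zero_le one_le_two))
  refine ⟨⋃ i, 𝒰 i, by rwa [sUnion_iUnion], encard_meeting_ball_iUnion_le fun i => (h𝒰 i).1,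
    fun U hU => ?_⟩
  obtain ⟨i, hi⟩ := mem_iUnion.1 hU
  exact (h𝒰 i).2 U hi

lemma MultiplicityASDimLE.asDimLE (hS : IsControlSemigroup S) {n : ℕ}
    (h : MultiplicityASDimLE S X n) : ASDimLE S X n := by
  obtain ⟨f, hf, s₀, H⟩ := h
  obtain ⟨x₁, hx₁⟩ := eventually_atTop.1 (hS.1 f hf).2.2.1
  have hc : (1 : ℝ≥0) ≤ n + 2 := le_add_left one_le_two
  refine ⟨(3 * ·) ∘ f ∘ ((n + 2) * ·),
    hS.2.2 _ (hS.2.2 _ (hS.const_mul_mem (by norm_num)) f hf) _ (hS.const_mul_mem hc),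
    max (max s₀ x₁) 1, fun s hs => ?_⟩
  simp only [max_le_iff] at hs
  obtain ⟨⟨hs₀, hx₁s⟩, hs1⟩ := hs
  set t := (n + 2) * s
  have hst : (n + 1) * s < t :=
    mul_lt_mul_of_pos_right (by norm_num) (one_pos.trans_le hs1)
  have hts : s ≤ t := le_mul_of_one_le_left zero_le hc
  obtain ⟨𝒰, hcov, hmult, hbdd⟩ := H t (hs₀.trans hts)
  obtain ⟨𝒱, hcov𝒱, h𝒱⟩ := exists_sDisjoint_cover_of_multiplicity_le hst hcov hmult hbdd
  refine ⟨𝒱, hcov𝒱, fun j => ⟨(h𝒱 j).1, (h𝒱 j).2.mono ?_⟩⟩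
  calc f t + 2 * t ≤ f t + 2 * f t := by gcongr; exact hx₁ t (hx₁s.trans hts)
    _ = 3 * f t := by ring

end ASDim

/-- `asdim_S X ≤ n` iff there is `f ∈ S` such that for all sufficiently large `s`
there is an `f(s)`-bounded cover of `X` whose `s`-multiplicity is at most `n+1`. -/
theorem asdim_le_iff_smultiplicity (S : Set (ℝ≥0 → ℝ≥0)) (hS : IsControlSemigroup S)
    (X : Type*) [MetricSpace X] (n : ℕ) :
    ASDim S X ≤ (n : ℕ∞) ↔
      ∃ f ∈ S, ∃ s₀ : ℝ≥0, ∀ s : ℝ≥0, s₀ ≤ s →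
        ∃ 𝒰 : Set (Set X), ⋃₀ 𝒰 = univ ∧
          (∀ x : X, {U | U ∈ 𝒰 ∧ (U ∩ Metric.ball x (s : ℝ)).Nonempty}.encard ≤ (n + 1 : ℕ∞)) ∧
          BoundedBy (f s) 𝒰 :=
  asDim_le_iff.trans ⟨(·.multiplicityASDimLE hS), MultiplicityASDimLE.asDimLE hS⟩
end

section
/- Let S̄ be a global control semigroup, X a metric space, and n ∈ ℕ. Then dim_S̄ X ≤ n if and only if both m-dim_S̄ X ≤ n and M-dim_S̄ X ≤ n; equivalently, dim_S̄ X = max{m-dim_S̄ X, M-dim_S̄ X}. -/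
open Filter Set Metric Topology
open scoped NNReal ENNReal

/-- A small-scale dim-control function. -/
def IsSSControl (f : ℝ≥0 → ℝ≥0) : Prop :=
  Continuous f ∧ Monotone f ∧ f 0 = 0 ∧ ∀ᶠ x in 𝓝[>] (0 : ℝ≥0), x ≤ f x

/-- Coincides with a linear function on a neighborhood of `0`. -/
def IsLinearNearZero (f : ℝ≥0 → ℝ≥0) : Prop :=
  ∃ a b : ℝ≥0, ∀ᶠ x in 𝓝 (0 : ℝ≥0), f x = a * x + b

/-- A small-scale control semigroup. -/
def IsSSControlSemigroup (ξ : Set (ℝ≥0 → ℝ≥0)) : Prop :=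
  (∀ f ∈ ξ, IsSSControl f) ∧
  (∀ f, IsSSControl f → IsLinearNearZero f → f ∈ ξ) ∧
  (∀ f ∈ ξ, ∀ g ∈ ξ, f ∘ g ∈ ξ)

/-- A global dim-control function. -/
def IsGlobalControl (f : ℝ≥0 → ℝ≥0) : Prop :=
  Continuous f ∧ Monotone f ∧ f 0 = 0 ∧ Tendsto f atTop atTop ∧
    (∀ᶠ x in 𝓝[>] (0 : ℝ≥0), x ≤ f x) ∧ (∀ᶠ x in atTop, x ≤ f x)

/-- A global control semigroup. -/
def IsGlobalControlSemigroup (S : Set (ℝ≥0 → ℝ≥0)) : Prop :=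
  (∀ f ∈ S, IsGlobalControl f) ∧
  (∀ f, IsGlobalControl f → IsLinearNearZero f → IsAsympLinear f → f ∈ S) ∧
  (∀ f ∈ S, ∀ g ∈ S, f ∘ g ∈ S)

/-- `smdim_ξ X ≤ n`. -/
def SMDimLE (ξ : Set (ℝ≥0 → ℝ≥0)) (X : Type*) [MetricSpace X] (n : ℕ) : Prop :=
  ∃ f ∈ ξ, ∃ s₀ : ℝ≥0, 0 < s₀ ∧ ∀ s : ℝ≥0, 0 < s → s ≤ s₀ →
    ∃ 𝒰 : Fin (n + 1) → Set (Set X),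
      (⋃ i, ⋃₀ 𝒰 i) = univ ∧ ∀ i, SDisjoint s (𝒰 i) ∧ BoundedBy (f s) (𝒰 i)

/-- The `ξ`-controlled small-scale dimension. -/
noncomputable def SMDim (ξ : Set (ℝ≥0 → ℝ≥0)) (X : Type*) [MetricSpace X] : ℕ∞ :=
  sInf {k : ℕ∞ | ∃ n : ℕ, k = n ∧ SMDimLE ξ X n}

/-- `dim_S̄ X ≤ n` (global dimension). -/
def GDimLE (S : Set (ℝ≥0 → ℝ≥0)) (X : Type*) [MetricSpace X] (n : ℕ) : Prop :=
  ∃ f ∈ S, ∀ s : ℝ≥0, 0 < s →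
    ∃ 𝒰 : Fin (n + 1) → Set (Set X),
      (⋃ i, ⋃₀ 𝒰 i) = univ ∧ ∀ i, SDisjoint s (𝒰 i) ∧ BoundedBy (f s) (𝒰 i)

/-- The `S̄`-controlled global dimension. -/
noncomputable def GDim (S : Set (ℝ≥0 → ℝ≥0)) (X : Type*) [MetricSpace X] : ℕ∞ :=
  sInf {k : ℕ∞ | ∃ n : ℕ, k = n ∧ GDimLE S X n}

/-- Large-scale truncation `Trunc^{**}(S̄)`. -/
def TruncInf (S : Set (ℝ≥0 → ℝ≥0)) : Set (ℝ≥0 → ℝ≥0) :=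
  {g | IsLSControl g ∧ ∃ f ∈ S, ∀ᶠ x in atTop, g x = f x}

/-- Small-scale truncation `Trunc_{**}(S̄)`. -/
def TruncZero (S : Set (ℝ≥0 → ℝ≥0)) : Set (ℝ≥0 → ℝ≥0) :=
  {g | IsSSControl g ∧ ∃ f ∈ S, ∀ᶠ x in 𝓝 (0 : ℝ≥0), g x = f x}

/-- The linked set `Link(ξ, S)`. -/
def Link (ξ S : Set (ℝ≥0 → ℝ≥0)) : Set (ℝ≥0 → ℝ≥0) :=
  {g | Continuous g ∧ Monotone g ∧
    ∃ g₁ ∈ ξ, ∃ g₂ ∈ S, (∀ᶠ x in 𝓝 (0 : ℝ≥0), g x = g₁ x) ∧ (∀ᶠ x in atTop, g x = g₂ x)}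

/-- The distance function of an explicitly given metric space structure. -/
def MDist {X : Type*} (m : MetricSpace X) (x y : X) : ℝ :=
  @dist X m.toPseudoMetricSpace.toDist x y

/-! For `s < 1` an `s`-disjoint cover of `(X, d)` stays `s`-disjoint for `min d 1`, and conversely
a cover for `min d 1` of mesh `< 1` has the same mesh for `d`. For `s ≥ 1` the metric `max 1 d`
has the same `s`-disjoint families as `d`, and changes bounds only by a max with `1`. At large
scales `min d 1` admits the one-piece cover, and at small scales `max 1 d` the cover by points.
So it suffices that every control function in `S̄` is dominated by one in `S̄` lying above the
identity; precomposing with a steep linear map provides it. -/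

section Covers

variable {X : Type*}

def HasCover (m : MetricSpace X) (n : ℕ) (s D : ℝ≥0) : Prop :=
  ∃ 𝒰 : Fin (n + 1) → Set (Set X),
    (⋃ i, ⋃₀ 𝒰 i) = univ ∧ ∀ i, @SDisjoint X m s (𝒰 i) ∧ @BoundedBy X m D (𝒰 i)

lemma mdist_self (m : MetricSpace X) (x : X) : MDist m x x = 0 :=
  @dist_self X m.toPseudoMetricSpace x

lemma boundedBy_iff (m : MetricSpace X) {D : ℝ≥0} {𝒰 : Set (Set X)} :
    @BoundedBy X m D 𝒰 ↔ ∀ U ∈ 𝒰, ∀ x ∈ U, ∀ y ∈ U, MDist m x y ≤ D := by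
  let _ := m
  refine forall₂_congr fun U _ => (Metric.ediam_le_iff (s := U)).trans ?_
  simp only [edist_le_coe, ← NNReal.coe_le_coe, coe_nndist]
  rfl

lemma HasCover.of_dist {m₁ m₂ : MetricSpace X} {n : ℕ} {s D s' D' : ℝ≥0}
    (hsep : ∀ x y, (s : ℝ) < MDist m₁ x y → (s' : ℝ) < MDist m₂ x y)
    (hbdd : ∀ x y, MDist m₁ x y ≤ D → MDist m₂ x y ≤ D') (h : HasCover m₁ n s D) :
    HasCover m₂ n s' D' := by
  obtain ⟨𝒰, hcover, h𝒰⟩ := h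
  refine ⟨𝒰, hcover, fun i => ⟨fun U hU V hV hUV x hx y hy => ?_, ?_⟩⟩
  · exact hsep x y ((h𝒰 i).1 U hU V hV hUV x hx y hy)
  · rw [boundedBy_iff]
    exact fun U hU x hx y hy => hbdd x y ((boundedBy_iff m₁).1 (h𝒰 i).2 U hU x hx y hy)

lemma HasCover.mono {m : MetricSpace X} {n : ℕ} {s D s' D' : ℝ≥0} (hs : s' ≤ s) (hD : D ≤ D')
    (h : HasCover m n s D) : HasCover m n s' D' :=
  h.of_dist (fun _ _ hxy => (NNReal.coe_le_coe.2 hs).trans_lt hxy)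
    (fun _ _ hxy => hxy.trans (NNReal.coe_le_coe.2 hD))

lemma HasCover.mono_index {m : MetricSpace X} {a b : ℕ} {s D : ℝ≥0} (hab : a ≤ b)
    (h : HasCover m a s D) : HasCover m b s D := by
  obtain ⟨𝒰, hcover, h𝒰⟩ := h
  refine ⟨fun j => 𝒰 ⟨min j a, by omega⟩, eq_univ_of_forall fun x => ?_, fun j => h𝒰 _⟩
  obtain ⟨i, hi⟩ := mem_iUnion.1 (hcover ▸ mem_univ x)
  refine mem_iUnion.2 ⟨Fin.castLE (by omega) i, ?_⟩
  simpa [min_eq_left (Nat.lt_succ_iff.1 i.2)] using hi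

lemma hasCover_of_forall_dist_le {m : MetricSpace X} (n : ℕ) (s : ℝ≥0) {D : ℝ≥0}
    (h : ∀ x y, MDist m x y ≤ D) : HasCover m n s D := by
  refine ⟨fun _ => {univ}, eq_univ_of_forall fun x => mem_iUnion.2 ⟨0, univ, rfl, mem_univ x⟩,
    fun _ => ⟨?_, ?_⟩⟩
  · rintro U rfl V rfl hUV
    exact absurd rfl hUV
  · rw [boundedBy_iff]
    rintro U rfl x - y -
    exact h x y

lemma hasCover_singletons {m : MetricSpace X} (n : ℕ) {s : ℝ≥0}
    (h : ∀ x y, x ≠ y → (s : ℝ) < MDist m x y) : HasCover m n s 0 := by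
  refine ⟨fun _ => range fun x => {x},
    eq_univ_of_forall fun x => mem_iUnion.2 ⟨0, {x}, ⟨x, rfl⟩, rfl⟩, fun _ => ⟨?_, ?_⟩⟩
  · rintro _ ⟨u, rfl⟩ _ ⟨v, rfl⟩ huv x rfl y rfl
    exact h x y fun hxy => huv (congrArg _ hxy)
  · rw [boundedBy_iff]
    rintro _ ⟨u, rfl⟩ x rfl y rfl
    simp [mdist_self]

section Truncated

variable {m m' : MetricSpace X} (h' : ∀ x y : X, MDist m' x y = min (MDist m x y) 1)
include h'

lemma HasCover.truncated {n : ℕ} {s D : ℝ≥0} (hs : s < 1) (h : HasCover m n s D) :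
    HasCover m' n s D :=
  h.of_dist (fun x y hxy => by rw [h']; exact lt_min hxy (by exact_mod_cast hs))
    (fun x y hxy => by rw [h']; exact (min_le_left _ _).trans hxy)

lemma hasCover_truncated (n : ℕ) (s : ℝ≥0) : HasCover m' n s 1 :=
  hasCover_of_forall_dist_le n s fun x y => by rw [h', NNReal.coe_one]; exact min_le_right _ _

lemma HasCover.of_truncated {n : ℕ} {s D : ℝ≥0} (hD : D < 1) (h : HasCover m' n s D) :
    HasCover m n s D :=
  h.of_dist (fun x y hxy => by rw [h'] at hxy; exact hxy.trans_le (min_le_left _ _))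
    (fun x y hxy => by
      rw [h'] at hxy
      exact (min_le_iff.1 hxy).resolve_right (not_le.2 (by exact_mod_cast hD)))

end Truncated

section Separated

variable {m m'' : MetricSpace X} (h'' : ∀ x y : X, x ≠ y → MDist m'' x y = max 1 (MDist m x y))
include h''

lemma dist_le_dist_separated (x y : X) : MDist m x y ≤ MDist m'' x y := by
  rcases eq_or_ne x y with rfl | hxy
  · simp only [mdist_self, le_refl]
  · rw [h'' x y hxy]
    exact le_max_right _ _

lemma hasCover_separated (n : ℕ) {s : ℝ≥0} (hs : s < 1) : HasCover m'' n s 0 :=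
  hasCover_singletons n fun x y hxy => by
    rw [h'' x y hxy]
    exact lt_max_of_lt_left (by exact_mod_cast hs)

lemma HasCover.separated {n : ℕ} {s D : ℝ≥0} (h : HasCover m n s D) :
    HasCover m'' n s (max 1 D) :=
  h.of_dist (fun x y hxy => hxy.trans_le (dist_le_dist_separated h'' x y))
    (fun x y hxy => by
      rcases eq_or_ne x y with rfl | hne
      · rw [mdist_self]
        positivity
      · rw [h'' x y hne, NNReal.coe_max, NNReal.coe_one]
        exact max_le_max le_rfl hxy)

lemma HasCover.of_separated {n : ℕ} {s D : ℝ≥0} (hs : 1 ≤ s) (h : HasCover m'' n s D) :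
    HasCover m n s D :=
  h.of_dist
    (fun x y hxy => by
      rcases eq_or_ne x y with rfl | hne
      · rw [mdist_self] at hxy
        exact absurd hxy (not_lt.2 s.coe_nonneg)
      · rw [h'' x y hne] at hxy
        exact (lt_max_iff.1 hxy).resolve_left (not_lt.2 (by exact_mod_cast hs)))
    (fun x y hxy => (dist_le_dist_separated h'' x y).trans hxy)

end Separated

end Covers

lemma IsGlobalControl.exists_self_le_apply_outside {f : ℝ≥0 → ℝ≥0} (hf : IsGlobalControl f) :
    ∃ ε > 0, ∃ M, ∀ x, (x ≤ ε ∨ M ≤ x) → x ≤ f x := by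
  obtain ⟨-, -, -, -, hsmall, hlarge⟩ := hf
  obtain ⟨ε, hε, hball⟩ := (nhdsGT_basis (0 : ℝ≥0)).eventually_iff.1 hsmall
  obtain ⟨M, hM⟩ := eventually_atTop.1 hlarge
  refine ⟨ε / 2, by positivity, M, fun x hx => ?_⟩
  rcases hx with hx | hx
  · rcases eq_zero_or_pos x with rfl | hx0
    · exact zero_le
    · exact hball ⟨hx0, hx.trans_lt (NNReal.half_lt_self hε.ne')⟩
  · exact hM x hx

section ControlSemigroup

variable {Sb : Set (ℝ≥0 → ℝ≥0)} (hSb : IsGlobalControlSemigroup Sb)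
include hSb

lemma IsGlobalControlSemigroup.const_mul_mem {c : ℝ≥0} (hc : 1 ≤ c) : (c * ·) ∈ Sb := by
  have hle : ∀ x : ℝ≥0, x ≤ c * x := fun x => le_mul_of_one_le_left zero_le hc
  exact hSb.2.1 _ ⟨continuous_const.mul continuous_id, fun _ _ hab => mul_le_mul_right hab c,
    mul_zero c, tendsto_atTop_mono hle tendsto_id, .of_forall hle, .of_forall hle⟩
    ⟨c, 0, .of_forall fun _ => (add_zero _).symm⟩ ⟨c, 0, .of_forall fun _ => (add_zero _).symm⟩

lemma IsGlobalControlSemigroup.exists_ge_id_ge {f : ℝ≥0 → ℝ≥0} (hf : f ∈ Sb) :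
    ∃ F ∈ Sb, id ≤ F ∧ f ≤ F := by
  have hfc := hSb.1 f hf
  have hmono : Monotone f := hfc.2.1
  obtain ⟨ε, hε, M, hfx⟩ := hfc.exists_self_le_apply_outside
  obtain ⟨W, hW⟩ := (tendsto_atTop.1 hfc.2.2.2.1 M).exists
  set c := max 1 (W / ε)
  have hc : 1 ≤ c := le_max_left _ _
  have hle_c : ∀ x, x ≤ c * x := fun x => le_mul_of_one_le_left zero_le hc
  refine ⟨f ∘ (c * ·), hSb.2.2 f hf _ (hSb.const_mul_mem hc), fun x => ?_,
    fun x => hmono (hle_c x)⟩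
  by_cases hx : x ≤ ε ∨ M ≤ x
  · exact (hfx x hx).trans (hmono (hle_c x))
  · simp only [not_or, not_le] at hx
    have hWc : W ≤ c * x := calc
      W = W / ε * ε := (div_mul_cancel₀ _ hε.ne').symm
      _ ≤ c * x := mul_le_mul' (le_max_right _ _) hx.1.le
    exact hx.2.le.trans (hW.trans (hmono hWc))

variable {X : Type*} {m m' m'' : MetricSpace X} {n : ℕ}

lemma gdimLE_truncated (h' : ∀ x y : X, MDist m' x y = min (MDist m x y) 1)
    (hle : @GDimLE Sb X m n) : @GDimLE Sb X m' n := by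
  obtain ⟨f, hf, hcov⟩ : ∃ f ∈ Sb, ∀ s, 0 < s → HasCover m n s (f s) := hle
  obtain ⟨F, hF, hidF, hfF⟩ := hSb.exists_ge_id_ge hf
  refine ⟨F, hF, fun s hs => ?_⟩
  rcases lt_or_ge s 1 with hs1 | hs1
  · exact ((hcov s hs).truncated h' hs1).mono le_rfl (hfF s)
  · exact (hasCover_truncated h' n s).mono le_rfl (hs1.trans (hidF s))

lemma gdimLE_separated (h'' : ∀ x y : X, x ≠ y → MDist m'' x y = max 1 (MDist m x y))
    (hle : @GDimLE Sb X m n) : @GDimLE Sb X m'' n := by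
  obtain ⟨f, hf, hcov⟩ : ∃ f ∈ Sb, ∀ s, 0 < s → HasCover m n s (f s) := hle
  obtain ⟨F, hF, hidF, hfF⟩ := hSb.exists_ge_id_ge hf
  refine ⟨F, hF, fun s hs => ?_⟩
  rcases lt_or_ge s 1 with hs1 | hs1
  · exact (hasCover_separated h'' n hs1).mono le_rfl (zero_le)
  · exact ((hcov s hs).separated h'').mono le_rfl (max_le (hs1.trans (hidF s)) (hfF s))

lemma gdimLE_of_truncated_of_separated (h' : ∀ x y : X, MDist m' x y = min (MDist m x y) 1)
    (h'' : ∀ x y : X, x ≠ y → MDist m'' x y = max 1 (MDist m x y))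
    (hle' : @GDimLE Sb X m' n) (hle'' : @GDimLE Sb X m'' n) : @GDimLE Sb X m n := by
  obtain ⟨f₁, hf₁, hcov₁⟩ : ∃ f ∈ Sb, ∀ s, 0 < s → HasCover m' n s (f s) := hle'
  obtain ⟨f₂, hf₂, hcov₂⟩ : ∃ f ∈ Sb, ∀ s, 0 < s → HasCover m'' n s (f s) := hle''
  obtain ⟨F₁, hF₁, hidF₁, hfF₁⟩ := hSb.exists_ge_id_ge hf₁
  obtain ⟨F₂, hF₂, hidF₂, hfF₂⟩ := hSb.exists_ge_id_ge hf₂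
  refine ⟨F₂ ∘ F₁, hSb.2.2 F₂ hF₂ F₁ hF₁, fun s hs => ?_⟩
  rcases lt_or_ge (f₁ s) 1 with hsmall | hlarge
  · exact ((hcov₁ s hs).of_truncated h' hsmall).mono le_rfl ((hfF₁ s).trans (hidF₂ _))
  · -- at the scale `F₁ s ≥ max 1 s`, disjointness for `max 1 d` is disjointness for `d`
    have ht : 1 ≤ F₁ s := hlarge.trans (hfF₁ s)
    exact ((hcov₂ (F₁ s) (one_pos.trans_le ht)).of_separated h'' ht).mono (hidF₁ s) (hfF₂ _)

end ControlSemigroup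

lemma gdimLE_mono {X : Type*} {m : MetricSpace X} {Sb : Set (ℝ≥0 → ℝ≥0)} {a b : ℕ}
    (hab : a ≤ b) (h : @GDimLE Sb X m a) : @GDimLE Sb X m b :=
  let ⟨f, hf, hcov⟩ := h
  ⟨f, hf, fun s hs => HasCover.mono_index hab (hcov s hs)⟩

lemma gdim_le_coe_iff {X : Type*} {m : MetricSpace X} {Sb : Set (ℝ≥0 → ℝ≥0)} {n : ℕ} :
    @GDim Sb X m ≤ n ↔ @GDimLE Sb X m n := by
  refine ⟨fun h => ?_, fun h => sInf_le ⟨n, rfl, h⟩⟩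
  obtain ⟨_, ⟨j, rfl, hj⟩, hjn⟩ := sInf_lt_iff.1 (h.trans_lt (ENat.natCast_lt_natCast.2 n.lt_succ_self))
  exact gdimLE_mono (Nat.lt_succ_iff.1 (by exact_mod_cast hjn)) hj

lemma ENat.eq_max_of_forall_coe_le_iff {a b c : ℕ∞} (h : ∀ k : ℕ, a ≤ k ↔ b ≤ k ∧ c ≤ k) :
    a = max b c :=
  eq_of_forall_ge_iff fun d => by
    induction d using ENat.recTopCoe with
    | top => simp only [le_top]
    | coe k => rw [max_le_iff]; exact h k

/-- `dim_S̄ X ≤ n` iff `m-dim_S̄ X ≤ n` and `M-dim_S̄ X ≤ n`; equivalently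
`dim_S̄ X = max (m-dim_S̄ X) (M-dim_S̄ X)`.  Here `m-dim` and `M-dim` are the
global dimensions with respect to `d'_1 = min(d,1)` and `d''_1`
(`d''_1(x,y) = max (1, d(x,y))` for `x ≠ y`). -/
theorem gdim_eq_max_microscopic_macroscopic (X : Type*) (m : MetricSpace X)
    (Sb : Set (ℝ≥0 → ℝ≥0)) (hSb : IsGlobalControlSemigroup Sb) (n : ℕ)
    (m' m'' : MetricSpace X)
    (h' : ∀ x y : X, MDist m' x y = min (MDist m x y) 1)
    (h'' : ∀ x y : X, x ≠ y → MDist m'' x y = max 1 (MDist m x y)) :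
    (@GDim Sb X m ≤ (n : ℕ∞) ↔ @GDim Sb X m' ≤ (n : ℕ∞) ∧ @GDim Sb X m'' ≤ (n : ℕ∞)) ∧
    @GDim Sb X m = max (@GDim Sb X m') (@GDim Sb X m'') := by
  have key (k : ℕ) : @GDim Sb X m ≤ k ↔ @GDim Sb X m' ≤ k ∧ @GDim Sb X m'' ≤ k := by
    simp only [gdim_le_coe_iff]
    exact ⟨fun h => ⟨gdimLE_truncated hSb h' h, gdimLE_separated hSb h'' h⟩,
      fun h => gdimLE_of_truncated_of_separated hSb h' h'' h.1 h.2⟩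
  exact ⟨key n, ENat.eq_max_of_forall_coe_le_iff key⟩
end
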